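/- The map (0,1) ∋ a ↦ f_a ∈ H^∞(Δ) is continuous in the supremum norm, where f_a(z) = sinh(az)/((1+z)sinh(z)) on the angular domain Δ = {z : |Arg z| < π/4}. -/

import Mathlib

/-!
The map `a ↦ f_a` is in fact `√2`-Lipschitz on `[-1, 1]` in the sup norm over the sector.
By the mean value theorem in `a`, `|sinh(az) - sinh(bz)| ≤ |a - b| |z| cosh(Re z)`, while the
denominator satisfies `|(1 + z) sinh z| ≥ (1 + x) sinh x` with `x = Re z`. In the sector
`|z| ≤ √2 x`, and `x cosh x ≤ (1 + x) sinh x` for `x ≥ 0`.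
-/

open Complex

theorem Complex.norm_cosh_le_cosh_re (w : ℂ) : ‖cosh w‖ ≤ Real.cosh w.re := by
  rw [cosh, Real.cosh_eq, norm_div, Complex.norm_two]
  gcongr
  refine (norm_add_le _ _).trans_eq ?_
  rw [norm_exp, norm_exp, neg_re]

theorem Complex.sinh_re_le_norm_sinh (w : ℂ) : Real.sinh w.re ≤ ‖sinh w‖ := by
  rw [sinh, Real.sinh_eq, norm_div, Complex.norm_two]
  gcongr
  refine le_trans (le_of_eq ?_) (norm_sub_norm_le _ _)
  rw [norm_exp, norm_exp, neg_re]

theorem Complex.norm_le_sqrt_two_mul_re_of_abs_arg_le {z : ℂ} (hz : |z.arg| ≤ Real.pi / 4) :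
    ‖z‖ ≤ Real.sqrt 2 * z.re := by
  have hcos : Real.sqrt 2 / 2 ≤ Real.cos z.arg := by
    rw [← Real.cos_abs, ← Real.cos_pi_div_four]
    exact Real.cos_le_cos_of_nonneg_of_le_pi (abs_nonneg _) (by linarith [Real.pi_pos]) hz
  have hs2 : Real.sqrt 2 * Real.sqrt 2 = 2 := Real.mul_self_sqrt zero_le_two
  calc ‖z‖ = Real.sqrt 2 * (‖z‖ * (Real.sqrt 2 / 2)) := by linear_combination -‖z‖ * hs2 / 2
    _ ≤ Real.sqrt 2 * (‖z‖ * Real.cos z.arg) := by gcongr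
    _ = Real.sqrt 2 * z.re := by rw [norm_mul_cos_arg]

theorem Complex.norm_sinh_mul_sub_sinh_mul_le (z : ℂ) {a b : ℝ}
    (ha : a ∈ Set.Icc (-1 : ℝ) 1) (hb : b ∈ Set.Icc (-1 : ℝ) 1) :
    ‖sinh (a * z) - sinh (b * z)‖ ≤ ‖z‖ * Real.cosh z.re * |a - b| := by
  have hderiv : ∀ t ∈ Set.Icc (-1 : ℝ) 1, HasDerivWithinAt (fun t : ℝ => sinh (t * z))
      (cosh (t * z) * z) (Set.Icc (-1) 1) t := fun t _ => by
    simpa using ((hasDerivAt_id (t : ℂ)).mul_const z).csinh.comp_ofReal.hasDerivWithinAt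
  have hbound : ∀ t ∈ Set.Icc (-1 : ℝ) 1, ‖cosh (t * z) * z‖ ≤ ‖z‖ * Real.cosh z.re := by
    intro t ht
    rw [norm_mul, mul_comm]
    gcongr
    refine (norm_cosh_le_cosh_re _).trans (Real.cosh_le_cosh.mpr ?_)
    rw [re_ofReal_mul, abs_mul]
    exact mul_le_of_le_one_left (abs_nonneg _) (abs_le.mpr ht)
  simpa [Real.norm_eq_abs] using
    (convex_Icc _ _).norm_image_sub_le_of_norm_hasDerivWithin_le hderiv hbound hb ha

theorem Real.mul_cosh_le_one_add_mul_sinh {x : ℝ} (hx : 0 ≤ x) :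
    x * cosh x ≤ (1 + x) * sinh x := by
  have hexp : exp (-x) ≤ 1 := exp_le_one_iff.mpr (neg_nonpos.mpr hx)
  have hsinh : x ≤ sinh x := self_le_sinh_iff.mpr hx
  calc x * cosh x = x * sinh x + x * exp (-x) := by rw [← cosh_sub_sinh]; ring
    _ ≤ x * sinh x + sinh x := by gcongr; nlinarith
    _ = (1 + x) * sinh x := by ring

noncomputable def sinhRatio (a : ℝ) (z : ℂ) : ℂ :=
  if z = 0 then a else sinh (a * z) / ((1 + z) * sinh z)

theorem norm_sinhRatio_sub_le {z : ℂ} (hz : |z.arg| ≤ Real.pi / 4) {a b : ℝ}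
    (ha : a ∈ Set.Icc (-1 : ℝ) 1) (hb : b ∈ Set.Icc (-1 : ℝ) 1) :
    ‖sinhRatio a z - sinhRatio b z‖ ≤ Real.sqrt 2 * |a - b| := by
  by_cases hz0 : z = 0
  · simp only [sinhRatio, if_pos hz0, ← ofReal_sub, norm_real, Real.norm_eq_abs]
    exact le_mul_of_one_le_left (abs_nonneg _) (Real.one_le_sqrt.mpr one_le_two)
  set x := z.re
  have hz_le : ‖z‖ ≤ Real.sqrt 2 * x := norm_le_sqrt_two_mul_re_of_abs_arg_le hz
  have hx : 0 < x :=
    pos_of_mul_pos_right ((norm_pos_iff.mpr hz0).trans_le hz_le) (Real.sqrt_nonneg 2)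
  have hden_pos : 0 < (1 + x) * Real.sinh x := by
    have := Real.sinh_pos_iff.mpr hx
    positivity
  have hden : (1 + x) * Real.sinh x ≤ ‖(1 + z) * sinh z‖ := by
    rw [norm_mul]
    have hre : 1 + x ≤ ‖1 + z‖ := by simpa using re_le_norm (1 + z)
    gcongr
    exact sinh_re_le_norm_sinh z
  simp only [sinhRatio, if_neg hz0]
  rw [div_sub_div_same, norm_div, div_le_iff₀ (hden_pos.trans_le hden)]
  calc ‖sinh (a * z) - sinh (b * z)‖ ≤ ‖z‖ * Real.cosh x * |a - b| :=
        norm_sinh_mul_sub_sinh_mul_le z ha hb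
    _ ≤ Real.sqrt 2 * x * Real.cosh x * |a - b| := by gcongr
    _ = Real.sqrt 2 * |a - b| * (x * Real.cosh x) := by ring
    _ ≤ Real.sqrt 2 * |a - b| * ((1 + x) * Real.sinh x) := by
        gcongr Real.sqrt 2 * |a - b| * ?_
        exact Real.mul_cosh_le_one_add_mul_sinh hx.le
    _ ≤ Real.sqrt 2 * |a - b| * ‖(1 + z) * sinh z‖ := by gcongr

theorem fa_continuous_in_a (a₀ : ℝ) (ha₀ : a₀ ∈ Set.Ioo (0:ℝ) 1) :
    ∀ ε > 0, ∃ δ > 0, ∀ a ∈ Set.Ioo (0:ℝ) 1, |a - a₀| < δ →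
      ∀ z : ℂ, |z.arg| < Real.pi / 4 →
        ‖(if z = 0 then (a : ℂ) else Complex.sinh ((a : ℂ) * z) / ((1 + z) * Complex.sinh z)) -
          (if z = 0 then (a₀ : ℂ) else Complex.sinh ((a₀ : ℂ) * z) / ((1 + z) * Complex.sinh z))‖ < ε := by
  have hIcc : Set.Ioo (0 : ℝ) 1 ⊆ Set.Icc (-1) 1 := fun t ht => ⟨by linarith [ht.1], ht.2.le⟩
  intro ε hε
  refine ⟨ε / 2, half_pos hε, fun a ha hδ z hz => ?_⟩
  calc ‖sinhRatio a z - sinhRatio a₀ z‖ ≤ Real.sqrt 2 * |a - a₀| :=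
        norm_sinhRatio_sub_le hz.le (hIcc ha) (hIcc ha₀)
    _ ≤ 2 * |a - a₀| := by gcongr; exact (Real.sqrt_le_left zero_le_two).mpr (by norm_num)
    _ < ε := by linarith
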